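/- arXiv:2209.06700 — 2 statements merged into one kernel-verified Lean document; each statement's English description precedes it below -/
import Mathlib

section
/- The PRESB block factorization: for square matrices K' and M' of the same size, the block matrix [[K', −M'], [M', K' + 2M']] equals the product [[I, −I],[0, I]] · [[K' + M', 0],[M', K' + M']] · [[I, I],[0, I]]. -/
open Matrix

theorem stmt_6 {n : ℕ} (K' M' : Matrix (Fin n) (Fin n) ℝ) :
    Matrix.fromBlocks K' (-M') M' (K' + (2 : ℝ) • M') =
      Matrix.fromBlocks (1 : Matrix (Fin n) (Fin n) ℝ) (-1) 0 1 *
        Matrix.fromBlocks (K' + M') 0 M' (K' + M') *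
        Matrix.fromBlocks (1 : Matrix (Fin n) (Fin n) ℝ) 1 0 1 := by
  simp [Matrix.fromBlocks_multiply]
  ext i j
  simp [mul_add, add_mul, two_smul]
  ring
end

section
/- If K' + M' is invertible, then the PRESB preconditioner P = [[K', −M'], [M', K' + 2M']] is invertible, with P⁻¹ = [[I, I],[0, I]]⁻¹ · [[ (K'+M')⁻¹, 0],[−(K'+M')⁻¹ M' (K'+M')⁻¹, (K'+M')⁻¹]] · [[I, −I],[0, I]]⁻¹. -/
open Matrix

theorem stmt_7 {n : ℕ} (K' M' : Matrix (Fin n) (Fin n) ℝ)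
    (h : IsUnit (K' + M').det) :
    IsUnit (Matrix.fromBlocks K' (-M') M' (K' + (2 : ℝ) • M')).det ∧
    (Matrix.fromBlocks K' (-M') M' (K' + (2 : ℝ) • M'))⁻¹ =
      (Matrix.fromBlocks (1 : Matrix (Fin n) (Fin n) ℝ) 1 0 1)⁻¹ *
        Matrix.fromBlocks (K' + M')⁻¹ 0
          (-((K' + M')⁻¹ * M' * (K' + M')⁻¹)) (K' + M')⁻¹ *
        (Matrix.fromBlocks (1 : Matrix (Fin n) (Fin n) ℝ) (-1) 0 1)⁻¹ := by
  set D := K' + M' with hD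
  set U : Matrix (Fin n ⊕ Fin n) (Fin n ⊕ Fin n) ℝ := Matrix.fromBlocks 1 (-1) 0 1 with hU
  set V : Matrix (Fin n ⊕ Fin n) (Fin n ⊕ Fin n) ℝ := Matrix.fromBlocks 1 1 0 1 with hV
  set B : Matrix (Fin n ⊕ Fin n) (Fin n ⊕ Fin n) ℝ := Matrix.fromBlocks D 0 M' D with hB
  have hfact : Matrix.fromBlocks K' (-M') M' (K' + (2 : ℝ) • M') = U * B * V := by
    rw [hU, hB, hV, Matrix.fromBlocks_multiply, Matrix.fromBlocks_multiply]
    congr 1 <;> simp [hD, Matrix.mul_add, Matrix.add_mul, two_smul] <;> abel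
  have hDinv : D * D⁻¹ = 1 := Matrix.mul_nonsing_inv D h
  have hBinv : B⁻¹ = Matrix.fromBlocks D⁻¹ 0 (-(D⁻¹ * M' * D⁻¹)) D⁻¹ := by
    apply Matrix.inv_eq_right_inv
    rw [hB, Matrix.fromBlocks_multiply]
    have h0 : M' * D⁻¹ + -(D * (D⁻¹ * (M' * D⁻¹))) = 0 := by
      rw [← Matrix.mul_assoc, hDinv, Matrix.one_mul]
      simp
    simp [hDinv, h0, Matrix.mul_assoc, ← Matrix.fromBlocks_one]
  constructor
  · rw [hfact, Matrix.det_mul, Matrix.det_mul]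
    have hUdet : U.det = 1 := by rw [hU, Matrix.det_fromBlocks_zero₂₁]; simp
    have hVdet : V.det = 1 := by rw [hV, Matrix.det_fromBlocks_zero₂₁]; simp
    have hBdet : IsUnit B.det := by
      rw [hB, Matrix.det_fromBlocks_zero₁₂]; exact h.mul h
    rw [hUdet, hVdet]; simpa using hBdet
  · rw [hfact, Matrix.mul_inv_rev, Matrix.mul_inv_rev, hBinv, Matrix.mul_assoc, Matrix.mul_assoc]
end
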